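/- The map sending a continuous integer-valued function f on the dyadic integers to its Haar integral induces a group isomorphism from the coinvariants C(Ω,Z)/{f − f∘τ : f ∈ C(Ω,Z)} onto Z[1/2], where τ is translation by 1. -/

import Mathlib

open MeasureTheory

/-- The subgroup `ℤ[1/2]` of `ℝ` of dyadic rationals (generated by the `2⁻ⁿ`). -/
noncomputable def dyadicSubgroup : AddSubgroup ℝ :=
  AddSubgroup.closure {x : ℝ | ∃ n : ℕ, x = ((2 : ℝ) ^ n)⁻¹}

/-- The odometer `x ↦ x + 1` on the dyadic integers, as a continuous map. -/
noncomputable def tau : C(ℤ_[2], ℤ_[2]) := ⟨fun x => x + 1, by continuity⟩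

/-- The subgroup of `C(Ω, ℤ)` generated by the elements `f - f ∘ τ`. -/
noncomputable def coinvRel : AddSubgroup C(ℤ_[2], ℤ) :=
  AddSubgroup.closure {g | ∃ f : C(ℤ_[2], ℤ), g = f - f.comp tau}

/-!
Every continuous `f : ℤ_[2] → ℤ` factors through `ℤ_[2] → ZMod (2 ^ n)` for some `n`, and Haar
measure pushes forward to the uniform measure on `ZMod (2 ^ n)`, so `∫ f = (∑ₐ g a) / 2 ^ n` for
the induced `g`. Hence the integral takes values in `ℤ[1/2]`, and is onto since the indicator of
a fibre integrates to `2⁻ⁿ`. It kills `f - f ∘ τ` by translation invariance. Conversely, if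
`∫ f = 0` then `∑ₐ g a = 0`, so `g` is a coboundary `F - F(· + 1)` on the cycle `ZMod (2 ^ n)`
(take for `F` minus the partial sums of `g`), and `f = h - h ∘ τ` with `h = F ∘ toZModPow n`.
-/

open scoped ENNReal

namespace ZMod

theorem sum_range_natCast {N : ℕ} [NeZero N] {M : Type*} [AddCommMonoid M] (g : ZMod N → M) :
    ∑ j ∈ Finset.range N, g j = ∑ a, g a :=
  Finset.sum_bij' (fun j _ => (j : ZMod N)) (fun a _ => a.val) (by simp)
    (fun a _ => Finset.mem_range.2 a.val_lt) (fun j hj => val_cast_of_lt (Finset.mem_range.1 hj))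
    (fun a _ => natCast_zmod_val a) (fun _ _ => rfl)

theorem exists_eq_sub_comp_add_one_of_sum_eq_zero {N : ℕ} [NeZero N] {G : Type*}
    [AddCommGroup G] {g : ZMod N → G} (hg : ∑ a, g a = 0) :
    ∃ F : ZMod N → G, ∀ a, g a = F a - F (a + 1) := by
  let S : ℕ → G := fun k => ∑ j ∈ Finset.range k, g j
  have hS : ∀ k, S (k + 1) = S k + g k := fun k => Finset.sum_range_succ _ _
  have hSN : S N = 0 := (sum_range_natCast g).trans hg
  refine ⟨fun a => -S a.val, fun a => ?_⟩
  dsimp only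
  have hval : (a + 1).val = (a.val + 1) % N := by
    rw [← val_natCast, Nat.cast_succ, natCast_zmod_val]
  obtain h | h := (show a.val + 1 ≤ N from a.val_lt).lt_or_eq
  · rw [hval, Nat.mod_eq_of_lt h, hS, natCast_zmod_val]
    abel
  · rw [← h, hS, natCast_zmod_val] at hSN
    rw [hval, h, Nat.mod_self, show S 0 = 0 from Finset.sum_range_zero _, neg_zero, sub_zero]
    exact eq_neg_of_add_eq_zero_right hSN

end ZMod

namespace ContinuousMap

variable {X : Type*} [TopologicalSpace X] [CompactSpace X] [MeasurableSpace X]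
  [OpensMeasurableSpace X]

theorem integrable_intCast (μ : Measure X) [IsFiniteMeasure μ] (f : C(X, ℤ)) :
    Integrable (fun x => (f x : ℝ)) μ :=
  (continuous_of_discreteTopology.comp f.continuous).integrable_of_hasCompactSupport
    (.of_compactSpace _)

noncomputable def integralAddHom (μ : Measure X) [IsFiniteMeasure μ] : C(X, ℤ) →+ ℝ where
  toFun f := ∫ x, (f x : ℝ) ∂μ
  map_zero' := by simp
  map_add' f g := by
    simp only [coe_add, Pi.add_apply, Int.cast_add]
    exact integral_add (integrable_intCast μ f) (integrable_intCast μ g)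

theorem integralAddHom_apply (μ : Measure X) [IsFiniteMeasure μ] (f : C(X, ℤ)) :
    integralAddHom μ f = ∫ x, (f x : ℝ) ∂μ :=
  rfl

end ContinuousMap

open ContinuousMap

namespace PadicInt

variable {p : ℕ} [Fact p.Prime]

theorem toZModPow_eq_toZModPow_iff {n : ℕ} {x y : ℤ_[p]} :
    toZModPow n x = toZModPow n y ↔ ‖x - y‖ ≤ (p : ℝ) ^ (-n : ℤ) := by
  rw [← sub_eq_zero, ← map_sub, ← RingHom.mem_ker, ker_toZModPow, norm_le_pow_iff_mem_span_pow]

theorem continuous_toZModPow (n : ℕ) : Continuous (toZModPow n : ℤ_[p] → ZMod (p ^ n)) := by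
  refine continuous_iff_continuousAt.2 fun x => ?_
  rw [ContinuousAt, nhds_discrete (ZMod (p ^ n)), Filter.tendsto_pure]
  have hr : (0 : ℝ) < (p : ℝ) ^ (-n : ℤ) := zpow_pos (Nat.cast_pos.2 (Fact.out : p.Prime).pos) _
  filter_upwards [Metric.ball_mem_nhds x hr] with y hy
  exact toZModPow_eq_toZModPow_iff.2 (mem_ball_iff_norm.1 hy).le

theorem _root_.ContinuousMap.exists_eq_comp_toZModPow {X : Type*} [TopologicalSpace X]
    [DiscreteTopology X] (f : C(ℤ_[p], X)) :
    ∃ (n : ℕ) (g : ZMod (p ^ n) → X), ∀ x, f x = g (toZModPow n x) := by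
  obtain ⟨δ, hδ, hball⟩ := lebesgue_number_lemma_of_metric isCompact_univ
    (fun i => (isOpen_discrete {i}).preimage f.continuous) (fun x _ => Set.mem_iUnion.2 ⟨f x, rfl⟩)
  obtain ⟨n, hn⟩ := exists_pow_neg_lt p hδ
  refine ⟨n, fun a => f (a.val : ℤ_[p]), fun x => ?_⟩
  obtain ⟨i, hi⟩ := hball x (Set.mem_univ x)
  have hx : ((toZModPow n x).val : ℤ_[p]) ∈ Metric.ball x δ := by
    rw [mem_ball_iff_norm]
    refine lt_of_le_of_lt (toZModPow_eq_toZModPow_iff.1 ?_) hn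
    rw [map_natCast, ZMod.natCast_zmod_val]
  exact (hi (Metric.mem_ball_self hδ)).trans (hi hx).symm

section Haar

variable [MeasurableSpace ℤ_[p]] [BorelSpace ℤ_[p]]
  (μ : Measure ℤ_[p]) [IsProbabilityMeasure μ] [μ.IsAddLeftInvariant]

theorem measurable_toZModPow (n : ℕ) : Measurable (toZModPow n : ℤ_[p] → ZMod (p ^ n)) :=
  measurable_to_countable' fun a =>
    ((isOpen_discrete {a}).preimage (continuous_toZModPow n)).measurableSet

theorem map_toZModPow (n : ℕ) : μ.map (toZModPow n) = ((p : ℝ≥0∞) ^ n)⁻¹ • Measure.count := by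
  set H := (toZModPow n : ℤ_[p] →+* ZMod (p ^ n)).toAddMonoidHom.ker
  have hsurj : Function.Surjective (toZModPow n : ℤ_[p] → ZMod (p ^ n)) :=
    ZMod.ringHom_surjective _
  have hindex : H.index = p ^ n := by
    rw [AddSubgroup.index_ker, AddMonoidHom.range_eq_top.2 hsurj]
    simp
  have hH : μ H = ((p : ℝ≥0∞) ^ n)⁻¹ := by
    have hmeas : MeasurableSet (H : Set ℤ_[p]) := measurable_toZModPow n (measurableSet_singleton 0)
    have := H.index_mul_measure hmeas μ
    rw [hindex, measure_univ] at this
    exact ENNReal.eq_inv_of_mul_eq_one_left (by rw [mul_comm]; exact_mod_cast this)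
  refine Measure.ext_iff_singleton.2 fun a => ?_
  obtain ⟨c, rfl⟩ := hsurj a
  have hfibre : toZModPow n ⁻¹' {toZModPow n c} = (fun x => -c + x) ⁻¹' (H : Set ℤ_[p]) := by
    ext x
    simp only [Set.mem_preimage, Set.mem_singleton_iff, SetLike.mem_coe, AddMonoidHom.mem_ker,
      RingHom.toAddMonoidHom_eq_coe, AddMonoidHom.coe_coe, map_add, map_neg, H]
    rw [neg_add_eq_zero, eq_comm]
  rw [Measure.map_apply (measurable_toZModPow n) (measurableSet_singleton _), hfibre,
    measure_preimage_add, hH]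
  simp

theorem integral_comp_toZModPow {E : Type*} [NormedAddCommGroup E] [NormedSpace ℝ E]
    [CompleteSpace E] {n : ℕ} (g : ZMod (p ^ n) → E) :
    ∫ x, g (toZModPow n x) ∂μ = ((p : ℝ) ^ n)⁻¹ • ∑ a, g a := by
  rw [← integral_map (measurable_toZModPow n).aemeasurable
    AEStronglyMeasurable.of_discrete, map_toZModPow μ, integral_smul_measure,
    integral_count]
  simp

theorem integralAddHom_eq_of_eq_comp_toZModPow {f : C(ℤ_[p], ℤ)} {n : ℕ}
    {g : ZMod (p ^ n) → ℤ} (hfg : ∀ x, f x = g (toZModPow n x)) :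
    integralAddHom μ f = (∑ a, g a) • ((p : ℝ) ^ n)⁻¹ := by
  simp only [integralAddHom_apply, hfg]
  rw [integral_comp_toZModPow μ (fun a => (g a : ℝ)), smul_eq_mul, zsmul_eq_mul, Int.cast_sum,
    mul_comm]

end Haar

end PadicInt

open PadicInt

theorem toZModPow_tau (n : ℕ) (x : ℤ_[2]) : toZModPow n (tau x) = toZModPow n x + 1 := by
  rw [show tau x = x + 1 from rfl, map_add, map_one]

theorem inv_two_pow_mem_dyadicSubgroup (n : ℕ) : ((2 : ℝ) ^ n)⁻¹ ∈ dyadicSubgroup :=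
  AddSubgroup.subset_closure ⟨n, rfl⟩

section Odometer

variable [MeasurableSpace ℤ_[2]] [BorelSpace ℤ_[2]]
  (μ : Measure ℤ_[2]) [IsProbabilityMeasure μ] [μ.IsAddLeftInvariant]

theorem integralAddHom_comp_tau (f : C(ℤ_[2], ℤ)) :
    integralAddHom μ (f.comp tau) = integralAddHom μ f := by
  simp only [integralAddHom_apply, comp_apply, show ∀ x, tau x = 1 + x from fun x => add_comm x 1]
  exact integral_add_left_eq_self (fun x => (f x : ℝ)) 1

theorem ker_integralAddHom : (integralAddHom μ).ker = coinvRel := by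
  refine le_antisymm (fun f hf => ?_) ?_
  · obtain ⟨n, g, hfg⟩ := f.exists_eq_comp_toZModPow
    rw [AddMonoidHom.mem_ker, integralAddHom_eq_of_eq_comp_toZModPow μ hfg] at hf
    obtain ⟨F, hF⟩ := ZMod.exists_eq_sub_comp_add_one_of_sum_eq_zero
      ((smul_eq_zero.1 hf).resolve_right (by positivity))
    let h : C(ℤ_[2], ℤ) := ⟨F ∘ toZModPow n, continuous_of_discreteTopology.comp
      (continuous_toZModPow n)⟩
    have hf_eq : f = h - h.comp tau := by
      ext x
      simp [h, hfg x, hF, toZModPow_tau]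
    exact hf_eq ▸ AddSubgroup.subset_closure ⟨h, rfl⟩
  · rw [coinvRel, AddSubgroup.closure_le]
    rintro _ ⟨f, rfl⟩
    rw [SetLike.mem_coe, AddMonoidHom.mem_ker, map_sub, integralAddHom_comp_tau, sub_self]

theorem range_integralAddHom : (integralAddHom μ).range = dyadicSubgroup := by
  refine le_antisymm ?_ ?_
  · rintro _ ⟨f, rfl⟩
    obtain ⟨n, g, hfg⟩ := f.exists_eq_comp_toZModPow
    rw [integralAddHom_eq_of_eq_comp_toZModPow μ hfg]
    exact zsmul_mem (by exact_mod_cast inv_two_pow_mem_dyadicSubgroup n) _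
  · rw [dyadicSubgroup, AddSubgroup.closure_le]
    rintro _ ⟨n, rfl⟩
    rw [SetLike.mem_coe, AddMonoidHom.mem_range]
    let f : C(ℤ_[2], ℤ) := ⟨Pi.single 0 1 ∘ toZModPow n, continuous_of_discreteTopology.comp
      (continuous_toZModPow n)⟩
    refine ⟨f, ?_⟩
    rw [integralAddHom_eq_of_eq_comp_toZModPow μ (g := Pi.single 0 1) fun _ => rfl]
    simp

end Odometer

/-- Integration against normalized Haar measure induces an isomorphism from the
coinvariants `C(Ω, ℤ)/{f - f∘τ}` onto `ℤ[1/2]`. -/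
theorem stmt2 [MeasurableSpace ℤ_[2]] [BorelSpace ℤ_[2]]
    (μ : Measure ℤ_[2]) [IsProbabilityMeasure μ] [μ.IsAddLeftInvariant] :
    ∃ φ : (C(ℤ_[2], ℤ) ⧸ coinvRel) ≃+ dyadicSubgroup,
      ∀ f : C(ℤ_[2], ℤ),
        (φ (QuotientAddGroup.mk f) : ℝ) = ∫ x, (f x : ℝ) ∂μ := by
  refine ⟨(QuotientAddGroup.quotientAddEquivOfEq (ker_integralAddHom μ).symm).trans
    ((QuotientAddGroup.quotientKerEquivRange (integralAddHom μ)).trans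
      (AddEquiv.addSubgroupCongr (range_integralAddHom μ))), fun f => rfl⟩
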